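/- arXiv:1011.0984 — 4 statements merged into one kernel-verified Lean document; each statement's English description precedes it below -/
import Mathlib

section
/- The Galois numbers G_n = Σ_{k=0}^n C(n,k)_q satisfy the recursion G_{n+1} = 2G_n + (q^n - 1)G_{n-1}, with G_0 = 1 and G_1 = 2. -/
/-- `(q)_n = (1-q)(1-q^2)⋯(1-q^n)`, with `(q)_0 = 1`. -/
noncomputable def qPoch {K : Type*} [Field K] (q : K) (n : ℕ) : K :=
  ∏ j ∈ Finset.range n, (1 - q ^ (j + 1))

/-- The q-binomial coefficient `C(n,k)_q = (q)_n / ((q)_k (q)_{n-k})`. -/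
noncomputable def qBinom {K : Type*} [Field K] (q : K) (n k : ℕ) : K :=
  qPoch q n / (qPoch q k * qPoch q (n - k))

/-- The Galois number `G_n = Σ_{k=0}^n C(n,k)_q`. -/
noncomputable def galoisNumber {K : Type*} [Field K] (q : K) (n : ℕ) : K :=
  ∑ k ∈ Finset.range (n + 1), qBinom q n k

/-!
When `q` is not a root of unity (as `X ∈ ℚ(X)`, being transcendental), every `(q)_n` is nonzero
and Pascal's rule `C(a+1,b+1) = q^(a+1) C(a+1,b) + C(a,b+1)` combines with the absorption identity
`(1 - q^(a+1)) C(a+1,b) = (1 - q^(a+b+1)) C(a,b)` into the symmetric rule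
`C(a+1,b+1) = C(a+1,b) + C(a,b+1) + (q^(a+b+1) - 1) C(a,b)`. Summing it over `a + b = n` gives
`G_{n+2} - 2 = (G_{n+1} - 1) + (G_{n+1} - 1) + (q^(n+1) - 1) G_n`, the `1`s being boundary terms.
-/

open Finset Finset.Nat

theorem Finset.Nat.sum_antidiagonal_add_two {M : Type*} [AddCommMonoid M] {n : ℕ}
    {f : ℕ × ℕ → M} :
    ∑ p ∈ antidiagonal (n + 2), f p =
      f (0, n + 2) + f (n + 2, 0) + ∑ p ∈ antidiagonal n, f (p.1 + 1, p.2 + 1) := by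
  rw [sum_antidiagonal_succ, sum_antidiagonal_succ']
  exact (add_assoc _ _ _).symm

section QBinom

variable {K : Type*} [Field K] {q : K}

/-- `qBinomAdd q a b = C(a+b, a)_q`; this indexing avoids truncated subtraction. -/
noncomputable def qBinomAdd (q : K) (a b : ℕ) : K :=
  qPoch q (a + b) / (qPoch q a * qPoch q b)

theorem qPoch_succ (q : K) (n : ℕ) : qPoch q (n + 1) = qPoch q n * (1 - q ^ (n + 1)) :=
  prod_range_succ _ _

theorem qPoch_zero (q : K) : qPoch q 0 = 1 :=
  prod_range_zero _

theorem one_sub_pow_ne_zero (hq : ¬IsOfFinOrder q) {n : ℕ} (hn : 0 < n) : 1 - q ^ n ≠ 0 :=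
  fun h ↦ hq (isOfFinOrder_iff_pow_eq_one.2 ⟨n, hn, (sub_eq_zero.1 h).symm⟩)

theorem qPoch_ne_zero (hq : ¬IsOfFinOrder q) (n : ℕ) : qPoch q n ≠ 0 :=
  prod_ne_zero_iff.2 fun j _ ↦ one_sub_pow_ne_zero hq j.succ_pos

theorem qBinomAdd_zero_left (hq : ¬IsOfFinOrder q) (b : ℕ) : qBinomAdd q 0 b = 1 := by
  rw [qBinomAdd, zero_add, qPoch_zero, one_mul, div_self (qPoch_ne_zero hq b)]

theorem qBinomAdd_zero_right (hq : ¬IsOfFinOrder q) (a : ℕ) : qBinomAdd q a 0 = 1 := by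
  rw [qBinomAdd, add_zero, qPoch_zero, mul_one, div_self (qPoch_ne_zero hq a)]

theorem qBinomAdd_succ_succ (hq : ¬IsOfFinOrder q) (a b : ℕ) :
    qBinomAdd q (a + 1) (b + 1) =
      qBinomAdd q (a + 1) b + qBinomAdd q a (b + 1) + (q ^ (a + b + 1) - 1) * qBinomAdd q a b := by
  have ha := qPoch_ne_zero hq a
  have hb := qPoch_ne_zero hq b
  have ha' := one_sub_pow_ne_zero hq a.succ_pos
  have hb' := one_sub_pow_ne_zero hq b.succ_pos
  rw [qBinomAdd, qBinomAdd, qBinomAdd, qBinomAdd, show a + 1 + (b + 1) = a + b + 1 + 1 by ring,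
    show a + 1 + b = a + b + 1 by ring, show a + (b + 1) = a + b + 1 by ring,
    qPoch_succ q (a + b + 1), qPoch_succ q (a + b), qPoch_succ q a, qPoch_succ q b]
  field_simp
  ring

theorem galoisNumber_eq_sum_antidiagonal (q : K) (n : ℕ) :
    galoisNumber q n = ∑ p ∈ antidiagonal n, qBinomAdd q p.1 p.2 := by
  rw [sum_antidiagonal_eq_sum_range_succ (qBinomAdd q), galoisNumber]
  refine sum_congr rfl fun k hk ↦ ?_
  rw [qBinomAdd, Nat.add_sub_cancel' (Nat.lt_succ_iff.1 (mem_range.1 hk)), qBinom]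

theorem galoisNumber_zero (q : K) : galoisNumber q 0 = 1 := by
  simp [galoisNumber, qBinom, qPoch]

theorem galoisNumber_one (hq : ¬IsOfFinOrder q) : galoisNumber q 1 = 2 := by
  rw [galoisNumber_eq_sum_antidiagonal, sum_antidiagonal_succ, antidiagonal_zero, sum_singleton,
    qBinomAdd_zero_left hq, qBinomAdd_zero_right hq]
  norm_num

theorem galoisNumber_add_two (hq : ¬IsOfFinOrder q) (n : ℕ) :
    galoisNumber q (n + 2) = 2 * galoisNumber q (n + 1) + (q ^ (n + 1) - 1) * galoisNumber q n := by
  simp only [galoisNumber_eq_sum_antidiagonal]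
  have rule : ∀ p ∈ antidiagonal n, qBinomAdd q (p.1 + 1) (p.2 + 1) =
      qBinomAdd q (p.1 + 1) p.2 + qBinomAdd q p.1 (p.2 + 1) +
        (q ^ (n + 1) - 1) * qBinomAdd q p.1 p.2 := by
    rintro ⟨a, b⟩ hab
    rw [← mem_antidiagonal.1 hab]
    exact qBinomAdd_succ_succ hq a b
  have shift_left := sum_antidiagonal_succ (n := n) (f := fun p ↦ qBinomAdd q p.1 p.2)
  have shift_right := sum_antidiagonal_succ' (n := n) (f := fun p ↦ qBinomAdd q p.1 p.2)
  rw [sum_antidiagonal_add_two, sum_congr rfl rule, sum_add_distrib, sum_add_distrib, ← mul_sum]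
  simp only [qBinomAdd_zero_left hq, qBinomAdd_zero_right hq] at shift_left shift_right ⊢
  linear_combination -shift_left - shift_right

end QBinom

theorem RatFunc.not_isOfFinOrder_X {K : Type*} [Field K] : ¬IsOfFinOrder (X : RatFunc K) := by
  intro h
  obtain ⟨n, hn, hX⟩ := isOfFinOrder_iff_pow_eq_one.1 h
  exact (transcendental_X.pow hn) (hX ▸ isAlgebraic_one)

/-- `G_{n+1} = 2 G_n + (q^n - 1) G_{n-1}` for `n ≥ 1`, with `G_0 = 1`, `G_1 = 2`. -/
theorem galoisNumber_recursion :
    galoisNumber (RatFunc.X : RatFunc ℚ) 0 = 1 ∧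
    galoisNumber (RatFunc.X : RatFunc ℚ) 1 = 2 ∧
    ∀ n : ℕ, 1 ≤ n →
      galoisNumber (RatFunc.X : RatFunc ℚ) (n + 1) =
        2 * galoisNumber (RatFunc.X : RatFunc ℚ) n +
          ((RatFunc.X : RatFunc ℚ) ^ n - 1) * galoisNumber (RatFunc.X : RatFunc ℚ) (n - 1) := by
  refine ⟨galoisNumber_zero _, galoisNumber_one RatFunc.not_isOfFinOrder_X, fun n hn ↦ ?_⟩
  obtain ⟨m, rfl⟩ := Nat.exists_eq_add_of_le' hn
  exact galoisNumber_add_two RatFunc.not_isOfFinOrder_X m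
end

section
/- If q is a prime power and V is an n-dimensional F_q-vector space, then the number of subspaces of V, denoted G_n, satisfies the recursion G_{n+1} = 2G_n + (q^n - 1)G_{n-1} for n ≥ 1. -/
/-!
Write the `(n+1)`-dimensional space as `E × K` with `dim E = n`. A subspace containing `(0, 1)`
is the preimage of a subspace of `E`: there are `G n` of those. A subspace not containing `(0, 1)`
is the graph of a linear functional on a subspace `U` of `E`, and `Dual U ≃ U`, so there are
`∑ U, |U|` of those. Counting the pairs `(U, u)` with `u ∈ U` by `u` instead, `0` lies in all
`G n` subspaces and each of the `q ^ n - 1` nonzero vectors `v` lies in as many subspaces as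
`E ⧸ K ∙ v` has, namely `G (n - 1)`.
-/

open Module

namespace LinearPMap

variable {R E F : Type*} [Ring R] [AddCommGroup E] [Module R E] [AddCommGroup F] [Module R F]

def equivSigma : (E →ₗ.[R] F) ≃ Σ U : Submodule R E, U →ₗ[R] F where
  toFun f := ⟨f.domain, f.toFun⟩
  invFun p := ⟨p.1, p.2⟩
  left_inv _ := rfl
  right_inv _ := rfl

noncomputable def equivGraph :
    (E →ₗ.[R] F) ≃ {g : Submodule R (E × F) // ∀ x ∈ g, x.1 = 0 → x.2 = 0} where
  toFun f := ⟨f.graph, fun _ hx h => f.graph_fst_eq_zero_snd hx h⟩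
  invFun g := g.1.toLinearPMap
  left_inv f :=
    eq_of_eq_graph (f.graph.toLinearPMap_graph_eq fun _ hx h => f.graph_fst_eq_zero_snd hx h)
  right_inv g := Subtype.ext (g.1.toLinearPMap_graph_eq g.2)

end LinearPMap

section Field

variable {K V E : Type*} [Field K] [AddCommGroup V] [Module K V] [AddCommGroup E] [Module K E]

lemma Submodule.forall_snd_eq_zero_of_fst_eq_zero_iff_notMem (g : Submodule K (E × K)) :
    (∀ x ∈ g, x.1 = 0 → x.2 = 0) ↔ ((0, 1) : E × K) ∉ g := by
  refine ⟨fun h hg => one_ne_zero (h _ hg rfl), fun h x hx hx1 => ?_⟩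
  by_contra hx2
  refine h ?_
  convert g.smul_mem x.2⁻¹ hx using 1
  ext <;> simp [hx1, hx2]

lemma card_submodule_of_finrank_eq [FiniteDimensional K V] {k : ℕ} (h : finrank K V = k) :
    Nat.card (Submodule K V) = Nat.card (Submodule K (Fin k → K)) :=
  Nat.card_congr (Submodule.orderIsoMapComap
    (LinearEquiv.ofFinrankEq V (Fin k → K) (h.trans (finrank_fin_fun K).symm))).toEquiv

lemma card_submodule_mem [FiniteDimensional K V] {v : V} (hv : v ≠ 0) :
    Nat.card {U : Submodule K V // v ∈ U} =
      Nat.card (Submodule K (Fin (finrank K V - 1) → K)) := by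
  have hquot : finrank K (V ⧸ K ∙ v) = finrank K V - 1 := by
    rw [Submodule.finrank_quotient, finrank_span_singleton hv]
  rw [← card_submodule_of_finrank_eq hquot]
  exact Nat.card_congr ((Equiv.subtypeEquivRight fun U =>
    (Submodule.span_singleton_le_iff_mem v U).symm).trans (Submodule.comapMkQRelIso _).toEquiv.symm)

lemma card_submodule_prod_notMem [FiniteDimensional K E] :
    Nat.card {g : Submodule K (E × K) // ((0, 1) : E × K) ∉ g} =
      Nat.card (Σ U : Submodule K E, U) :=
  Nat.card_congr <|
    (Equiv.subtypeEquivRight Submodule.forall_snd_eq_zero_of_fst_eq_zero_iff_notMem).symm.trans <|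
    LinearPMap.equivGraph.symm.trans <| LinearPMap.equivSigma.trans <|
    Equiv.sigmaCongrRight fun U => (Module.finBasis K U).toDualEquiv.toEquiv.symm

lemma finite_submodule [Finite K] [FiniteDimensional K V] : Finite (Submodule K V) :=
  have : Finite V := Module.finite_of_finite K
  Finite.of_injective _ SetLike.coe_injective

end Field

section FiniteField

variable {K V E : Type*} [Field K] [Fintype K] [AddCommGroup V] [Module K V]
  [AddCommGroup E] [Module K E]

lemma card_sigma_submodule [FiniteDimensional K V] :
    Nat.card (Σ U : Submodule K V, U) = Nat.card (Submodule K V) +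
      (Fintype.card K ^ finrank K V - 1) * Nat.card (Submodule K (Fin (finrank K V - 1) → K)) := by
  classical
  have : Finite V := Module.finite_of_finite K
  let : Fintype V := Fintype.ofFinite V
  let byVector : (Σ U : Submodule K V, U) ≃ Σ v : V, {U : Submodule K V // v ∈ U} :=
    { toFun p := ⟨p.2, p.1, p.2.2⟩
      invFun p := ⟨p.2, p.1, p.2.2⟩
      left_inv _ := rfl
      right_inv _ := rfl }
  have hzero : Nat.card {U : Submodule K V // (0 : V) ∈ U} = Nat.card (Submodule K V) :=
    Nat.card_congr (Equiv.subtypeUnivEquiv Submodule.zero_mem)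
  rw [Nat.card_congr byVector, Nat.card_sigma, Fintype.sum_eq_add_sum_compl 0, hzero,
    Finset.sum_congr rfl fun v hv => card_submodule_mem (by simpa using hv),
    Finset.sum_const, smul_eq_mul, Finset.card_compl, Finset.card_singleton,
    card_eq_pow_finrank (K := K)]

lemma card_submodule_prod [FiniteDimensional K E] :
    Nat.card (Submodule K (E × K)) = 2 * Nat.card (Submodule K E) +
      (Fintype.card K ^ finrank K E - 1) * Nat.card (Submodule K (Fin (finrank K E - 1) → K)) := by
  classical
  have : Finite (Submodule K (E × K)) := finite_submodule
  have hmem : Nat.card {g : Submodule K (E × K) // ((0, 1) : E × K) ∈ g} =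
      Nat.card (Submodule K E) := by
    rw [card_submodule_mem (by simp), finrank_prod, finrank_self, Nat.add_sub_cancel]
    exact (card_submodule_of_finrank_eq rfl).symm
  rw [← Nat.card_congr (Equiv.sumCompl fun g : Submodule K (E × K) => ((0, 1) : E × K) ∈ g),
    Nat.card_sum, hmem, card_submodule_prod_notMem, card_sigma_submodule]
  ring

end FiniteField

theorem card_submodule_recursion_general {F : Type*} [Field F] [Fintype F]
    (G : ℕ → ℕ) (hG : ∀ k, G k = Nat.card (Submodule F (Fin k → F)))
    (n : ℕ) :
    G (n + 1) = 2 * G n + (Fintype.card F ^ n - 1) * G (n - 1) := by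
  have hdim : finrank F ((Fin n → F) × F) = n + 1 := by
    rw [finrank_prod, finrank_fin_fun, finrank_self]
  rw [hG, hG, hG, ← card_submodule_of_finrank_eq hdim, card_submodule_prod, finrank_fin_fun]

/-- If `q` is a prime power and `G_k` denotes the number of subspaces of a `k`-dimensional
vector space over the field `F` with `q` elements, then `G_{n+1} = 2G_n + (q^n - 1)G_{n-1}`
for `n ≥ 1`. -/
theorem card_submodule_recursion {F : Type*} [Field F] [Fintype F]
    (G : ℕ → ℕ) (hG : ∀ k, G k = Nat.card (Submodule F (Fin k → F)))
    (n : ℕ) (hn : 1 ≤ n) :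
    G (n + 1) = 2 * G n + (Fintype.card F ^ n - 1) * G (n - 1) :=
  card_submodule_recursion_general G hG n
end

section
/- (Gauss) The alternating sum of q-binomial coefficients satisfies Σ_{k=0}^n (-1)^k C(n,k)_q = ∏_{j < n, j odd} (1 - q^j) if n is even, and 0 if n is odd. -/
namespace GaussAux

open Finset

noncomputable def q : RatFunc ℚ := RatFunc.X

lemma one_sub_q_pow_ne (m : ℕ) : (1 : RatFunc ℚ) - q ^ (m + 1) ≠ 0 := by
  intro h
  have h1 : (q : RatFunc ℚ) ^ (m + 1) = 1 := (sub_eq_zero.mp h).symm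
  have h2 : (algebraMap (Polynomial ℚ) (RatFunc ℚ)) (Polynomial.X ^ (m+1)) =
      (algebraMap (Polynomial ℚ) (RatFunc ℚ)) 1 := by
    simpa [q, RatFunc.algebraMap_X] using h1
  have h3 : (Polynomial.X : Polynomial ℚ) ^ (m+1) = 1 :=
    (RatFunc.algebraMap_injective ℚ).eq_iff.mp h2
  have := congrArg Polynomial.natDegree h3
  simp [Polynomial.natDegree_X_pow] at this

lemma qPoch_ne (m : ℕ) : qPoch q m ≠ 0 := by
  unfold qPoch
  exact Finset.prod_ne_zero_iff.mpr fun j _ => one_sub_q_pow_ne j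

lemma qPoch_succ (m : ℕ) : qPoch q (m + 1) = qPoch q m * (1 - q ^ (m + 1)) :=
  Finset.prod_range_succ _ _

lemma qPoch_zero : qPoch q 0 = 1 := by simp [qPoch]

lemma qBinom_zero (n : ℕ) : qBinom q n 0 = 1 := by
  simp only [qBinom, qPoch_zero, one_mul, Nat.sub_zero]
  exact div_self (qPoch_ne n)

lemma qBinom_self (n : ℕ) : qBinom q n n = 1 := by
  simp only [qBinom, qPoch_zero, Nat.sub_self, mul_one]
  exact div_self (qPoch_ne n)

lemma pascal1 (a b : ℕ) :
    qBinom q (a + b + 2) (a + 1) =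
      qBinom q (a + b + 1) a + q ^ (a + 1) * qBinom q (a + b + 1) (a + 1) := by
  have h1 : a + b + 2 - (a + 1) = b + 1 := by omega
  have h2 : a + b + 1 - a = b + 1 := by omega
  have h3 : a + b + 1 - (a + 1) = b := by omega
  unfold qBinom
  rw [h1, h2, h3, show a + b + 2 = (a + b + 1) + 1 from rfl, qPoch_succ (a + b + 1),
    qPoch_succ a, qPoch_succ b]
  have e1 := qPoch_ne a
  have e2 := qPoch_ne b
  have e3 := qPoch_ne (a + b + 1)
  have e4 := one_sub_q_pow_ne a
  have e5 := one_sub_q_pow_ne b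
  field_simp
  ring

lemma pascal2 (a b : ℕ) :
    qBinom q (a + b + 2) (a + 1) =
      qBinom q (a + b + 1) (a + 1) + q ^ (b + 1) * qBinom q (a + b + 1) a := by
  have h1 : a + b + 2 - (a + 1) = b + 1 := by omega
  have h2 : a + b + 1 - a = b + 1 := by omega
  have h3 : a + b + 1 - (a + 1) = b := by omega
  unfold qBinom
  rw [h1, h2, h3, show a + b + 2 = (a + b + 1) + 1 from rfl, qPoch_succ (a + b + 1),
    qPoch_succ a, qPoch_succ b]
  have e1 := qPoch_ne a
  have e2 := qPoch_ne b
  have e3 := qPoch_ne (a + b + 1)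
  have e4 := one_sub_q_pow_ne a
  have e5 := one_sub_q_pow_ne b
  field_simp
  ring

noncomputable def S (n : ℕ) : RatFunc ℚ :=
  ∑ k ∈ Finset.range (n + 1), (-1 : RatFunc ℚ) ^ k * qBinom q n k

noncomputable def U (n : ℕ) : RatFunc ℚ :=
  ∑ k ∈ Finset.range (n + 1), (-q) ^ k * qBinom q n k

lemma key1 (n : ℕ) : ∀ i < n, qBinom q (n + 1) (i + 1) =
    qBinom q n i + q ^ (i + 1) * qBinom q n (i + 1) := by
  intro i hi
  have h := pascal1 i (n - 1 - i)
  have e1 : i + (n - 1 - i) + 2 = n + 1 := by omega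
  have e2 : i + (n - 1 - i) + 1 = n := by omega
  rwa [e1, e2] at h

lemma key2 (n : ℕ) : ∀ i < n, qBinom q (n + 1) (i + 1) =
    qBinom q n (i + 1) + q ^ (n - i) * qBinom q n i := by
  intro i hi
  have h := pascal2 i (n - 1 - i)
  have e1 : i + (n - 1 - i) + 2 = n + 1 := by omega
  have e2 : i + (n - 1 - i) + 1 = n := by omega
  have e3 : n - 1 - i + 1 = n - i := by omega
  rwa [e1, e2, e3] at h

lemma S_succ (n : ℕ) : S (n + 1) = -S n + U n := by
  unfold S U
  rw [Finset.sum_range_succ, Finset.sum_range_succ' (fun k => (-1 : RatFunc ℚ) ^ k * qBinom q (n + 1) k) n,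
    Finset.sum_range_succ (fun k => (-1 : RatFunc ℚ) ^ k * qBinom q n k) n,
    Finset.sum_range_succ' (fun k => (-q) ^ k * qBinom q n k) n]
  have step : ∀ i ∈ Finset.range n,
      (-1 : RatFunc ℚ) ^ (i + 1) * qBinom q (n + 1) (i + 1) =
        (-((-1) ^ i * qBinom q n i)) + ((-q) ^ (i + 1) * qBinom q n (i + 1)) := by
    intro i hi
    rw [key1 n i (Finset.mem_range.mp hi)]
    ring
  rw [Finset.sum_congr rfl step, Finset.sum_add_distrib, Finset.sum_neg_distrib,
    qBinom_zero, qBinom_self, qBinom_self, qBinom_zero]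
  ring

lemma U_succ (n : ℕ) : U (n + 1) = U n - q ^ (n + 1) * S n := by
  unfold S U
  rw [Finset.sum_range_succ, Finset.sum_range_succ' (fun k => (-q : RatFunc ℚ) ^ k * qBinom q (n + 1) k) n,
    Finset.sum_range_succ' (fun k => (-q) ^ k * qBinom q n k) n,
    Finset.sum_range_succ (fun k => (-1 : RatFunc ℚ) ^ k * qBinom q n k) n]
  have step : ∀ i ∈ Finset.range n,
      (-q) ^ (i + 1) * qBinom q (n + 1) (i + 1) =
        ((-q) ^ (i + 1) * qBinom q n (i + 1)) + (-(q ^ (n + 1) * ((-1) ^ i * qBinom q n i))) := by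
    intro i hi
    have hi' := Finset.mem_range.mp hi
    have hq : q ^ (i + 1) * q ^ (n - i) = q ^ (n + 1) := by
      rw [← pow_add]; congr 1; omega
    rw [key2 n i (Finset.mem_range.mp hi)]
    linear_combination (-((-1 : RatFunc ℚ) ^ i) * qBinom q n i) * hq
  rw [Finset.sum_congr rfl step, Finset.sum_add_distrib, Finset.sum_neg_distrib,
    ← Finset.mul_sum, qBinom_zero, qBinom_self, qBinom_zero, qBinom_self]
  ring

noncomputable def V (n : ℕ) : RatFunc ℚ :=
  ∏ j ∈ (Finset.range n).filter (fun j => Odd j), (1 - q ^ j)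

lemma V_succ_even {n : ℕ} (h : Even n) : V (n + 1) = V n := by
  unfold V
  rw [Finset.range_add_one, Finset.filter_insert]
  simp [Nat.not_odd_iff_even.mpr h]

lemma V_succ_odd {n : ℕ} (h : Odd n) : V (n + 1) = (1 - q ^ n) * V n := by
  unfold V
  rw [Finset.range_add_one, Finset.filter_insert, if_pos h,
    Finset.prod_insert (by simp)]

lemma main (n : ℕ) : (S n = if Even n then V n else 0) ∧ U n = V (n + 1) := by
  induction n with
  | zero =>
    constructor
    · simp [S, qBinom_zero, V]
    · simp [U, qBinom_zero, V, Finset.filter_singleton]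
  | succ n ih =>
    obtain ⟨hS, hU⟩ := ih
    by_cases h : Even n
    · have hV : V (n + 1) = V n := V_succ_even h
      have hSn : S n = V n := by rw [hS, if_pos h]
      constructor
      · rw [S_succ, hSn, hU, hV, if_neg (by simp [Nat.even_add_one, h])]
        ring
      · rw [U_succ, hSn, hU, V_succ_odd (n := n + 1) (by simp [Nat.odd_add_one, h]), hV]
        ring
    · have hSn : S n = 0 := by rw [hS, if_neg h]
      constructor
      · rw [S_succ, hSn, hU, if_pos (Nat.even_add_one.mpr h)]
        ring
      · rw [U_succ, hSn, hU, V_succ_even (Nat.even_add_one.mpr h)]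
        ring

end GaussAux

/-- (Gauss) `Σ_{k=0}^n (-1)^k C(n,k)_q = ∏_{j<n, j odd} (1-q^j)` if `n` is even, `0` otherwise. -/
theorem gauss_alternating_sum (n : ℕ) :
    ∑ k ∈ Finset.range (n + 1), (-1 : RatFunc ℚ) ^ k * qBinom (RatFunc.X : RatFunc ℚ) n k =
      if Even n then
        ∏ j ∈ (Finset.range n).filter (fun j => Odd j), (1 - (RatFunc.X : RatFunc ℚ) ^ j)
      else 0 := by
  have := (GaussAux.main n).1
  simpa [GaussAux.S, GaussAux.V, GaussAux.q] using this
end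

section
/- The single-variable Rogers-Szegő polynomial satisfies H_n(-q) = Σ_{k=0}^n C(n,k)_q (-q)^k = ∏_{j ≤ n, j odd} (1 - q^j). -/
namespace RSaux

open Finset

local notation "q" => (RatFunc.X : RatFunc ℚ)

lemma X_pow_ne_one (m : ℕ) (hm : m ≠ 0) : q ^ m ≠ 1 := by
  intro h
  have h2 : (Polynomial.X : Polynomial ℚ) ^ m = 1 := by
    apply IsFractionRing.injective (Polynomial ℚ) (RatFunc ℚ)
    simpa [map_pow, RatFunc.algebraMap_X] using h
  have := congrArg Polynomial.natDegree h2
  simp [Polynomial.natDegree_X_pow] at this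
  exact hm this

lemma one_sub_ne (m : ℕ) (hm : m ≠ 0) : (1 : RatFunc ℚ) - q ^ m ≠ 0 := by
  intro h
  exact X_pow_ne_one m hm (by linear_combination -h)

lemma qPoch_ne (n : ℕ) : qPoch q n ≠ 0 := by
  unfold qPoch
  exact Finset.prod_ne_zero_iff.mpr fun j _ => one_sub_ne (j + 1) (Nat.succ_ne_zero j)

lemma qPoch_succ (x : RatFunc ℚ) (n : ℕ) : qPoch x (n + 1) = qPoch x n * (1 - x ^ (n + 1)) :=
  Finset.prod_range_succ _ n

lemma qPoch_zero (x : RatFunc ℚ) : qPoch x 0 = 1 := rfl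

lemma qBinom_self (n : ℕ) : qBinom q n n = 1 := by
  unfold qBinom
  rw [Nat.sub_self, qPoch_zero, mul_one, div_self (qPoch_ne n)]

lemma qBinom_zero (n : ℕ) : qBinom q n 0 = 1 := by
  unfold qBinom
  rw [Nat.sub_zero, qPoch_zero, one_mul, div_self (qPoch_ne n)]

lemma pascal1 (k m : ℕ) :
    qBinom q (k + 1 + m + 1) (k + 1) =
      qBinom q (k + 1 + m) (k + 1) + q ^ (m + 1) * qBinom q (k + 1 + m) k := by
  unfold qBinom
  have h1 : k + 1 + m + 1 - (k + 1) = m + 1 := by omega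
  have h2 : k + 1 + m - (k + 1) = m := by omega
  have h3 : k + 1 + m - k = m + 1 := by omega
  rw [h1, h2, h3]
  rw [show k + 1 + m + 1 = (k + 1 + m) + 1 from rfl, qPoch_succ q (k + 1 + m),
    qPoch_succ q m, qPoch_succ q k]
  have hk := qPoch_ne k
  have hm := qPoch_ne m
  have hn := qPoch_ne (k + 1 + m)
  have e1 := one_sub_ne (k + 1) (by omega)
  have e2 := one_sub_ne (m + 1) (by omega)
  field_simp
  ring

lemma pascal2 (k m : ℕ) :
    qBinom q (k + 1 + m + 1) (k + 1) =
      q ^ (k + 1) * qBinom q (k + 1 + m) (k + 1) + qBinom q (k + 1 + m) k := by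
  unfold qBinom
  have h1 : k + 1 + m + 1 - (k + 1) = m + 1 := by omega
  have h2 : k + 1 + m - (k + 1) = m := by omega
  have h3 : k + 1 + m - k = m + 1 := by omega
  rw [h1, h2, h3]
  rw [show k + 1 + m + 1 = (k + 1 + m) + 1 from rfl, qPoch_succ q (k + 1 + m),
    qPoch_succ q m, qPoch_succ q k]
  have hk := qPoch_ne k
  have hm := qPoch_ne m
  have hn := qPoch_ne (k + 1 + m)
  have e1 := one_sub_ne (k + 1) (by omega)
  have e2 := one_sub_ne (m + 1) (by omega)
  field_simp
  ring

lemma pascal1' (k n : ℕ) (h : k < n) :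
    qBinom q (n + 1) (k + 1) = qBinom q n (k + 1) + q ^ (n - k) * qBinom q n k := by
  obtain ⟨m, rfl⟩ : ∃ m, n = k + 1 + m := ⟨n - (k + 1), by omega⟩
  have h3 : k + 1 + m - k = m + 1 := by omega
  rw [h3]
  exact pascal1 k m

lemma pascal2' (k n : ℕ) (h : k < n) :
    qBinom q (n + 1) (k + 1) = q ^ (k + 1) * qBinom q n (k + 1) + qBinom q n k := by
  obtain ⟨m, rfl⟩ : ∃ m, n = k + 1 + m := ⟨n - (k + 1), by omega⟩
  exact pascal2 k m

noncomputable def A (n : ℕ) : RatFunc ℚ := ∑ k ∈ range (n + 1), qBinom q n k * (-1) ^ k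

noncomputable def B (n : ℕ) : RatFunc ℚ := ∑ k ∈ range (n + 1), qBinom q n k * (-q) ^ k

noncomputable def Pa (n : ℕ) : RatFunc ℚ :=
  ∏ j ∈ (range n).filter (fun j => Odd j), (1 - q ^ j)

lemma hBsum (n : ℕ) : ∑ k ∈ range n, qBinom q n (k + 1) * (-q) ^ (k + 1) = B n - 1 := by
  have : B n = (∑ k ∈ range n, qBinom q n (k + 1) * (-q) ^ (k + 1)) + qBinom q n 0 * (-q) ^ 0 :=
    Finset.sum_range_succ' _ n
  rw [qBinom_zero, pow_zero, mul_one] at this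
  linear_combination -this

lemma hAsum (n : ℕ) : ∑ k ∈ range n, qBinom q n k * (-1 : RatFunc ℚ) ^ k = A n - (-1) ^ n := by
  have : A n = (∑ k ∈ range n, qBinom q n k * (-1) ^ k) + qBinom q n n * (-1) ^ n :=
    Finset.sum_range_succ _ n
  rw [qBinom_self, one_mul] at this
  linear_combination -this

lemma recB (n : ℕ) : B (n + 1) = B n - q ^ (n + 1) * A n := by
  have expand : B (n + 1) =
      (∑ k ∈ range n, qBinom q (n + 1) (k + 1) * (-q) ^ (k + 1))
        + qBinom q (n + 1) (n + 1) * (-q) ^ (n + 1) + qBinom q (n + 1) 0 * (-q) ^ 0 := by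
    rw [B, Finset.sum_range_succ' _ (n + 1), Finset.sum_range_succ]
  rw [expand, qBinom_self, qBinom_zero, one_mul, one_mul, pow_zero]
  have step : ∑ k ∈ range n, qBinom q (n + 1) (k + 1) * (-q) ^ (k + 1)
      = (∑ k ∈ range n, qBinom q n (k + 1) * (-q) ^ (k + 1))
        + ∑ k ∈ range n, (-(q ^ (n + 1))) * (qBinom q n k * (-1) ^ k) := by
    rw [← Finset.sum_add_distrib]
    refine Finset.sum_congr rfl fun k hk => ?_
    have hk' := Finset.mem_range.mp hk
    rw [pascal1' k n hk']
    have hq : q ^ (n - k) * (-q) ^ (k + 1) = -(q ^ (n + 1)) * (-1) ^ k := by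
      rw [neg_pow, ← mul_assoc, mul_comm (q ^ (n - k)), mul_assoc, ← pow_add,
        show n - k + (k + 1) = n + 1 by omega]
      ring
    calc (qBinom q n (k + 1) + q ^ (n - k) * qBinom q n k) * (-q) ^ (k + 1)
        = qBinom q n (k + 1) * (-q) ^ (k + 1)
          + qBinom q n k * (q ^ (n - k) * (-q) ^ (k + 1)) := by ring
      _ = _ := by rw [hq]; ring
  rw [step, ← Finset.mul_sum, hBsum, hAsum]
  rw [neg_pow]
  ring

lemma recA (n : ℕ) : A (n + 1) = B n - A n := by
  have expand : A (n + 1) =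
      (∑ k ∈ range n, qBinom q (n + 1) (k + 1) * (-1) ^ (k + 1))
        + qBinom q (n + 1) (n + 1) * (-1) ^ (n + 1) + qBinom q (n + 1) 0 * (-1) ^ 0 := by
    rw [A, Finset.sum_range_succ' _ (n + 1), Finset.sum_range_succ]
  rw [expand, qBinom_self, qBinom_zero, one_mul, one_mul, pow_zero]
  have step : ∑ k ∈ range n, qBinom q (n + 1) (k + 1) * (-1) ^ (k + 1)
      = (∑ k ∈ range n, qBinom q n (k + 1) * (-q) ^ (k + 1))
        + ∑ k ∈ range n, (-1 : RatFunc ℚ) * (qBinom q n k * (-1) ^ k) := by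
    rw [← Finset.sum_add_distrib]
    refine Finset.sum_congr rfl fun k hk => ?_
    have hk' := Finset.mem_range.mp hk
    rw [pascal2' k n hk', neg_pow q (k + 1)]
    ring
  rw [step, ← Finset.mul_sum, hBsum, hAsum]
  ring

lemma Pa_succ_even (n : ℕ) (h : ¬ Odd n) : Pa (n + 1) = Pa n := by
  unfold Pa
  rw [Finset.range_add_one, Finset.filter_insert, if_neg h]

lemma Pa_succ_odd (n : ℕ) (h : Odd n) : Pa (n + 1) = Pa n * (1 - q ^ n) := by
  unfold Pa
  rw [Finset.range_add_one, Finset.filter_insert, if_pos h,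
    Finset.prod_insert (by simp)]
  ring

lemma key (n : ℕ) : A n = (if Even n then Pa n else 0) ∧ B n = Pa (n + 1) := by
  induction n with
  | zero =>
      constructor
      · simp [A, qBinom_zero, Pa]
      · have h0 : Finset.filter (fun j => Odd j) ({0} : Finset ℕ) = ∅ := by decide
        simp [B, qBinom_zero, Pa, Finset.range_one, h0]
  | succ n ih =>
      obtain ⟨hA, hB⟩ := ih
      by_cases h : Even n
      · have hodd : ¬ Odd n := Nat.not_odd_iff_even.mpr h
        have hPa1 : Pa (n + 1) = Pa n := Pa_succ_even n hodd
        have hodd1 : Odd (n + 1) := Even.add_one h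
        have hPa2 : Pa (n + 2) = Pa (n + 1) * (1 - q ^ (n + 1)) := Pa_succ_odd (n + 1) hodd1
        constructor
        · rw [recA, hB, hA, if_pos h, if_neg (by simp [Nat.even_add_one, h]), hPa1]
          ring
        · rw [recB, hB, hA, if_pos h, hPa2, hPa1]
          ring
      · have hodd : Odd n := Nat.not_even_iff_odd.mp h
        have heven1 : Even (n + 1) := Odd.add_one hodd
        have hPa2 : Pa (n + 2) = Pa (n + 1) := Pa_succ_even (n + 1) (Nat.not_odd_iff_even.mpr heven1)
        constructor
        · rw [recA, hB, hA, if_neg h, if_pos heven1]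
          ring
        · rw [recB, hB, hA, if_neg h, hPa2]
          ring

end RSaux

/-- `H_n(-q) = Σ_{k=0}^n C(n,k)_q (-q)^k = ∏_{j ≤ n, j odd} (1 - q^j)`. -/
theorem rogersSzego_at_neg_q (n : ℕ) :
    ∑ k ∈ Finset.range (n + 1),
        qBinom (RatFunc.X : RatFunc ℚ) n k * (-(RatFunc.X : RatFunc ℚ)) ^ k =
      ∏ j ∈ (Finset.range (n + 1)).filter (fun j => Odd j),
        (1 - (RatFunc.X : RatFunc ℚ) ^ j) := by
  exact (RSaux.key n).2
end
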